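/- Let a^1, …, a^n ∈ ℕ^n be n nonzero exponent vectors (the same number as the number of variables) whose associated monomials z^{a^1}, …, z^{a^n} have common zero set {0} in ℂ^n. Then there is a permutation σ of {1, …, n} such that a^j = b_j · e_{σ(j)} for positive integers b_j; that is, each monomial is a pure power of a distinct variable. -/

import Mathlib

/-!
The basis vector `e_i` is not a common zero, so some monomial `z^{a^j}` does not vanish at it,
which forces `a^j` to be supported on `{i}`. Since every `a^j` is nonzero, the index `j` found
for `i` determines `i`, so `i ↦ j` is injective, hence a permutation of the `n` indices.
-/

open Function

theorem exists_eq_single_of_monomial_zeros_subset {ι κ R : Type*} [Fintype ι] [DecidableEq ι]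
    [CommMonoidWithZero R] [Nontrivial R] (a : κ → ι → ℕ)
    (hV : {z : ι → R | ∀ j, ∏ k, z k ^ a j k = 0} ⊆ {0}) (i : ι) :
    ∃ j, a j = Pi.single i (a j i) := by
  by_contra! h
  have hzero : (Pi.single i 1 : ι → R) ∈ {z : ι → R | ∀ j, ∏ k, z k ^ a j k = 0} := by
    intro j
    obtain ⟨k, hk⟩ := ne_iff.mp (h j)
    have hki : k ≠ i := by rintro rfl; simp at hk
    have hak : a j k ≠ 0 := by rwa [Pi.single_eq_of_ne hki] at hk
    exact Finset.prod_eq_zero (Finset.mem_univ k) (by rw [Pi.single_eq_of_ne hki, zero_pow hak])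
  exact one_ne_zero (congrFun (hV hzero) i ▸ (Pi.single_eq_same i 1).symm)

theorem exists_perm_eq_single_of_forall_exists_eq_single {ι M : Type*} [Finite ι]
    [DecidableEq ι] [Zero M] (a : ι → ι → M) (ha : ∀ j, a j ≠ 0)
    (h : ∀ i, ∃ j, a j = Pi.single i (a j i)) :
    ∃ σ : Equiv.Perm ι, ∀ j, a j = Pi.single (σ j) (a j (σ j)) := by
  choose g hg using h
  have hg_ne (i : ι) : a (g i) i ≠ 0 := fun h0 => ha (g i) (by rw [hg i, h0, Pi.single_zero])
  have hg_inj : Injective g := by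
    intro i i' hii'
    have hne := hg_ne i
    rw [hii', hg i'] at hne
    by_contra hne'
    exact hne (Pi.single_eq_of_ne hne' _)
  let e := Equiv.ofBijective g (Finite.injective_iff_bijective.mp hg_inj)
  refine ⟨e.symm, fun j => ?_⟩
  have hj : g (e.symm j) = j := e.apply_symm_apply j
  simpa only [hj] using hg (e.symm j)

theorem stmt_9 (n : ℕ) (a : Fin n → Fin n → ℕ) (ha : ∀ j, a j ≠ 0)
    (hV : {z : Fin n → ℂ | ∀ j, ∏ k, z k ^ a j k = 0} = {0}) :
    ∃ σ : Equiv.Perm (Fin n), ∀ j, ∃ b : ℕ, 1 ≤ b ∧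
      a j = fun i => if i = σ j then b else 0 := by
  obtain ⟨σ, hσ⟩ := exists_perm_eq_single_of_forall_exists_eq_single a ha
    (exists_eq_single_of_monomial_zeros_subset a hV.subset)
  refine ⟨σ, fun j => ⟨a j (σ j), ?_, (hσ j).trans (funext fun i => Pi.single_apply _ _ _)⟩⟩
  exact Nat.one_le_iff_ne_zero.mpr fun h0 => ha j (by rw [hσ j, h0, Pi.single_zero])
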